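/- Let a_k, b_k be a bounded Bregman alternating sequence with D(b_k, a_k) → ½(r*)² and D(b_{k-1}, a_k) → ½(r*)². Suppose on a neighborhood of the set of accumulation point pairs, every rl-building block satisfies the three-point inequality D(b, a⁺) ≥ D(b⁺, a⁺) + ℓ D(b, b⁺) with fixed ℓ ∈ (0,1). Then b_{k-1} - b_k → 0. -/

import Mathlib

/-!
Along the tail the pairs `(b (k+1), a (k+1))` lie in `U`: they stay in the compact set `K × K`,
all of whose cluster points lie in the open set `U`. There the three-point inequality bounds
`ℓ D(b_k, b_{k+1})` by the difference of two value sequences with the same limit, so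
`D(b_k, b_{k+1}) → 0`. Strict convexity makes the Bregman divergence `D` positive off the
diagonal, and `D` is continuous on `K × K`, so by compactness `b_k - b_{k+1} → 0`.
-/

open scoped RealInnerProductSpace
open Filter Set Topology

section Bregman

variable {E : Type*} [NormedAddCommGroup E] [InnerProductSpace ℝ E] [CompleteSpace E]
  {f : E → ℝ} {f' : E → E} {G : Set E} {x y g : E}

theorem ConvexOn.add_inner_sub_le_of_hasGradientAt (hf : ConvexOn ℝ G f) (hx : x ∈ G)
    (hy : y ∈ G) (hg : HasGradientAt f g y) : f y + ⟪g, x - y⟫ ≤ f x := by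
  let γ : ℝ →ᵃ[ℝ] E := AffineMap.lineMap y x
  have hγ : HasDerivAt (f ∘ γ) ⟪g, x - y⟫ 0 := by
    have hg' : HasFDerivAt f (InnerProductSpace.toDual ℝ E g) (γ 0) := by
      simpa [γ] using hasGradientAt_iff_hasFDerivAt.1 hg
    exact hg'.comp_hasDerivAt 0 AffineMap.hasDerivAt_lineMap
  have hγconv : ConvexOn ℝ (Icc 0 1) (f ∘ γ) :=
    (hf.comp_affineMap γ).subset (fun t ht => hf.1.lineMap_mem hy hx ht) (convex_Icc 0 1)
  have := hγconv.le_slope_of_hasDerivAt (left_mem_Icc.2 zero_le_one)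
    (right_mem_Icc.2 zero_le_one) zero_lt_one hγ
  simp only [slope_def_field, Function.comp_apply, AffineMap.lineMap_apply_one,
    AffineMap.lineMap_apply_zero, sub_zero, div_one, γ] at this
  linarith

theorem StrictConvexOn.add_inner_sub_lt_of_hasGradientAt (hf : StrictConvexOn ℝ G f)
    (hx : x ∈ G) (hy : y ∈ G) (hxy : x ≠ y) (hg : HasGradientAt f g y) :
    f y + ⟪g, x - y⟫ < f x := by
  let m := AffineMap.lineMap y x (1 / 2 : ℝ)
  have hm_tangent : f y + ⟪g, m - y⟫ ≤ f m :=
    hf.convexOn.add_inner_sub_le_of_hasGradientAt (hf.1.lineMap_mem hy hx (by norm_num)) hy hg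
  have hm_chord : f m < (1 - 1 / 2 : ℝ) * f y + (1 / 2 : ℝ) * f x := by
    simpa [m, AffineMap.lineMap_apply_module] using
      hf.2 hy hx hxy.symm (by norm_num : (0 : ℝ) < 1 - 1 / 2) (by norm_num : (0 : ℝ) < 1 / 2)
        (by norm_num)
  have hm_sub : ⟪g, m - y⟫ = (1 / 2 : ℝ) * ⟪g, x - y⟫ := by
    rw [show m - y = (1 / 2 : ℝ) • (x - y) from AffineMap.lineMap_vsub_left y x _,
      real_inner_smul_right]
  linarith

noncomputable def bregmanDiv (f : E → ℝ) (f' : E → E) (x y : E) : ℝ :=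
  f x - f y - ⟪f' y, x - y⟫

theorem bregmanDiv_nonneg (hf : ConvexOn ℝ G f) (hx : x ∈ G) (hy : y ∈ G)
    (hg : HasGradientAt f (f' y) y) : 0 ≤ bregmanDiv f f' x y := by
  have := hf.add_inner_sub_le_of_hasGradientAt hx hy hg
  rw [bregmanDiv]; linarith

theorem bregmanDiv_pos (hf : StrictConvexOn ℝ G f) (hx : x ∈ G) (hy : y ∈ G) (hxy : x ≠ y)
    (hg : HasGradientAt f (f' y) y) : 0 < bregmanDiv f f' x y := by
  have := hf.add_inner_sub_lt_of_hasGradientAt hx hy hxy hg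
  rw [bregmanDiv]; linarith

theorem ContDiffOn.continuousOn_gradient {n : WithTop ℕ∞} (hf : ContDiffOn ℝ n f G)
    (hG : IsOpen G) (hn : 1 ≤ n) : ContinuousOn (gradient f) G :=
  (InnerProductSpace.toDual ℝ E).symm.continuous.comp_continuousOn
    (hf.continuousOn_fderiv_of_isOpen hG hn)

theorem continuousOn_uncurry_bregmanDiv (hf : ContDiffOn ℝ 1 f G) (hG : IsOpen G)
    (hgrad : ∀ w ∈ G, HasGradientAt f (f' w) w) :
    ContinuousOn (Function.uncurry (bregmanDiv f f')) (G ×ˢ G) := by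
  have hf' : ContinuousOn f' G :=
    (hf.continuousOn_gradient hG le_rfl).congr fun w hw => (hgrad w hw).gradient.symm
  have hfc := hf.continuousOn
  exact ((hfc.comp continuousOn_fst fun p hp => hp.1).sub
    (hfc.comp continuousOn_snd fun p hp => hp.2)).sub
    ((hf'.comp continuousOn_snd fun p hp => hp.2).inner
      (continuous_fst.sub continuous_snd).continuousOn)

end Bregman

theorem IsCompact.tendsto_sub_nhds_zero {E ι : Type*} [SeminormedAddCommGroup E] {l : Filter ι}
    {K : Set E} (hK : IsCompact K) {D : E → E → ℝ}
    (hD : ContinuousOn (Function.uncurry D) (K ×ˢ K))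
    (hpos : ∀ x ∈ K, ∀ y ∈ K, x ≠ y → 0 < D x y) {x y : ι → E}
    (hx : ∀ i, x i ∈ K) (hy : ∀ i, y i ∈ K)
    (hxy : Tendsto (fun i => D (x i) (y i)) l (𝓝 0)) :
    Tendsto (fun i => x i - y i) l (𝓝 0) := by
  refine Metric.tendsto_nhds.2 fun ε hε => ?_
  -- `D` has a positive lower bound `δ` on the compact set of pairs at distance `≥ ε`.
  let S := K ×ˢ K ∩ {p | ε ≤ ‖p.1 - p.2‖}
  have hS : IsCompact S := (hK.prod hK).inter_right
    (isClosed_le continuous_const (continuous_fst.sub continuous_snd).norm)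
  obtain ⟨δ, hδ, hδS⟩ := hS.exists_forall_le' (hD.mono inter_subset_left)
    fun p hp => hpos p.1 hp.1.1 p.2 hp.1.2 fun h => by
      have hεp : ε ≤ ‖p.1 - p.2‖ := hp.2
      rw [h, sub_self, norm_zero] at hεp
      linarith
  filter_upwards [hxy.eventually (gt_mem_nhds hδ)] with i hi
  rw [dist_zero_right]
  by_contra! hle
  exact (hδS (x i, y i) ⟨⟨hx i, hy i⟩, hle⟩).not_gt hi

theorem alternating_bregman_successive_gap_vanishes_general {d : ℕ}
    (f : EuclideanSpace ℝ (Fin d) → ℝ)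
    (f' : EuclideanSpace ℝ (Fin d) → EuclideanSpace ℝ (Fin d))
    (G : Set (EuclideanSpace ℝ (Fin d))) (hG : IsOpen G)
    (hsmooth : ContDiffOn ℝ 2 f G) (hstrict : StrictConvexOn ℝ G f)
    (hgrad : ∀ w ∈ G, HasGradientAt f (f' w) w)
    (A B : Set (EuclideanSpace ℝ (Fin d)))
    (D : EuclideanSpace ℝ (Fin d) → EuclideanSpace ℝ (Fin d) → ℝ)
    (hD : ∀ x y, D x y = f x - f y - ⟪f' y, x - y⟫)
    (K : Set (EuclideanSpace ℝ (Fin d))) (hK : IsCompact K) (hKG : K ⊆ G)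
    (hAK : A ⊆ K) (hBK : B ⊆ K)
    (a b : ℕ → EuclideanSpace ℝ (Fin d))
    (hbk : ∀ k, b k ∈ B ∧ ∀ b' ∈ B, D (b k) (a k) ≤ D b' (a k))
    (hak : ∀ k, a (k + 1) ∈ A ∧ ∀ a' ∈ A, D (b k) (a (k + 1)) ≤ D (b k) a')
    (rstar : ℝ)
    (hval1 : Tendsto (fun k => D (b k) (a k)) atTop (nhds (rstar ^ 2 / 2)))
    (hval2 : Tendsto (fun k => D (b k) (a (k + 1))) atTop (nhds (rstar ^ 2 / 2)))
    (ℓ : ℝ) (hℓ0 : 0 < ℓ)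
    (U : Set (EuclideanSpace ℝ (Fin d) × EuclideanSpace ℝ (Fin d)))
    (hUopen : IsOpen U)
    (hUacc : {p | MapClusterPt p atTop (fun k => (b (k + 1), a (k + 1)))} ⊆ U)
    (h3pt : ∀ k, (b (k + 1), a (k + 1)) ∈ U →
      D (b k) (a (k + 1)) ≥ D (b (k + 1)) (a (k + 1)) + ℓ * D (b k) (b (k + 1))) :
    Tendsto (fun k => b k - b (k + 1)) atTop (nhds 0) := by
  obtain rfl : D = bregmanDiv f f' := funext₂ hD
  have hbK : ∀ k, b k ∈ K := fun k => hBK (hbk k).1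
  have hbG : ∀ k, b k ∈ G := fun k => hKG (hbK k)
  have hU : ∀ᶠ k in atTop, (b (k + 1), a (k + 1)) ∈ U :=
    (hK.prod hK).tendsto_nhdsSet_of_mapClusterPt
      (Eventually.of_forall fun k => ⟨hbK (k + 1), hAK (hak k).1⟩) (fun p _ hp => hUacc hp)
      (hUopen.mem_nhdsSet.2 subset_rfl)
  have hval_gap : Tendsto (fun k => bregmanDiv f f' (b k) (a (k + 1)) -
      bregmanDiv f f' (b (k + 1)) (a (k + 1))) atTop (𝓝 0) := by
    simpa using hval2.sub ((tendsto_add_atTop_iff_nat 1).2 hval1)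
  have hb_gap : Tendsto (fun k => bregmanDiv f f' (b k) (b (k + 1))) atTop (𝓝 0) := by
    refine tendsto_of_tendsto_of_tendsto_of_le_of_le' tendsto_const_nhds
      (by simpa using hval_gap.div_const ℓ) (Eventually.of_forall fun k =>
        bregmanDiv_nonneg hstrict.convexOn (hbG k) (hbG (k + 1)) (hgrad _ (hbG (k + 1)))) ?_
    filter_upwards [hU] with k hk
    rw [le_div_iff₀ hℓ0]
    linarith [h3pt k hk]
  exact hK.tendsto_sub_nhds_zero
    ((continuousOn_uncurry_bregmanDiv (hsmooth.of_le one_le_two) hG hgrad).mono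
      (prod_mono hKG hKG))
    (fun x hx y hy hxy => bregmanDiv_pos hstrict (hKG hx) (hKG hy) hxy (hgrad y (hKG hy)))
    hbK (fun k => hbK (k + 1)) hb_gap

/-- If a bounded Bregman alternating sequence has value convergence to `½(r*)²` and the
rl-three-point inequality holds with a fixed `ℓ ∈ (0,1)` on a neighborhood of the set of
accumulation point pairs, then consecutive `b`-iterates tighten: `b_{k} - b_{k+1} → 0`. -/
theorem alternating_bregman_successive_gap_vanishes {d : ℕ}
    (f : EuclideanSpace ℝ (Fin d) → ℝ)
    (f' : EuclideanSpace ℝ (Fin d) → EuclideanSpace ℝ (Fin d))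
    (G : Set (EuclideanSpace ℝ (Fin d))) (hG : IsOpen G) (hGconv : Convex ℝ G)
    (hsmooth : ContDiffOn ℝ 2 f G) (hstrict : StrictConvexOn ℝ G f)
    (hgrad : ∀ w ∈ G, HasGradientAt f (f' w) w)
    (A B : Set (EuclideanSpace ℝ (Fin d)))
    (D : EuclideanSpace ℝ (Fin d) → EuclideanSpace ℝ (Fin d) → ℝ)
    (hD : ∀ x y, D x y = f x - f y - ⟪f' y, x - y⟫)
    (K : Set (EuclideanSpace ℝ (Fin d))) (hK : IsCompact K) (hKG : K ⊆ G)
    (hAK : A ⊆ K) (hBK : B ⊆ K)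
    (a b : ℕ → EuclideanSpace ℝ (Fin d))
    (hbk : ∀ k, b k ∈ B ∧ ∀ b' ∈ B, D (b k) (a k) ≤ D b' (a k))
    (hak : ∀ k, a (k + 1) ∈ A ∧ ∀ a' ∈ A, D (b k) (a (k + 1)) ≤ D (b k) a')
    (rstar : ℝ)
    (hval1 : Tendsto (fun k => D (b k) (a k)) atTop (nhds (rstar ^ 2 / 2)))
    (hval2 : Tendsto (fun k => D (b k) (a (k + 1))) atTop (nhds (rstar ^ 2 / 2)))
    (ℓ : ℝ) (hℓ0 : 0 < ℓ) (hℓ1 : ℓ < 1)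
    (U : Set (EuclideanSpace ℝ (Fin d) × EuclideanSpace ℝ (Fin d)))
    (hUopen : IsOpen U)
    (hUacc : {p | MapClusterPt p atTop (fun k => (b (k + 1), a (k + 1)))} ⊆ U)
    (h3pt : ∀ k, (b (k + 1), a (k + 1)) ∈ U →
      D (b k) (a (k + 1)) ≥ D (b (k + 1)) (a (k + 1)) + ℓ * D (b k) (b (k + 1))) :
    Tendsto (fun k => b k - b (k + 1)) atTop (nhds 0) :=
  alternating_bregman_successive_gap_vanishes_general f f' G hG hsmooth hstrict hgrad A B D hD K hK
    hKG hAK hBK a b hbk hak rstar hval1 hval2 ℓ hℓ0 U hUopen hUacc h3pt
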